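/- Every simple graph on a finite vertex type with at most 4 elements is 2-clique-colorable. -/

import Mathlib

/-- A set of vertices is a maximal clique if it is a clique and no strict
superset of it is a clique. -/
def IsMaximalClique {V : Type*} (G : SimpleGraph V) (s : Set V) : Prop :=
  G.IsClique s ∧ ∀ t : Set V, G.IsClique t → s ⊆ t → s = t

/-- A set of vertices is monochromatic under a 2-coloring `c` if `c` is
constant on it. -/
def MonochromaticOn {V : Type*} (c : V → Bool) (s : Set V) : Prop :=
  ∀ u ∈ s, ∀ v ∈ s, c u = c v

/-- `G` is 2-clique-colorable if some 2-coloring makes every maximal clique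
with at least two vertices nonmonochromatic. -/
def TwoCliqueColorable {V : Type*} (G : SimpleGraph V) : Prop :=
  ∃ c : V → Bool, ∀ s : Set V, IsMaximalClique G s →
    (∃ u ∈ s, ∃ v ∈ s, u ≠ v) → ¬ MonochromaticOn c s

/-- A graph `G` satisfies a signed edge condition `((u, v), sign)` if `u` and
`v` are adjacent when the sign is `true`, and nonadjacent when it is `false`. -/
def SatisfiesCond {m : ℕ} (G : SimpleGraph (Fin m)) (c : (Fin m × Fin m) × Bool) : Prop :=
  if c.2 = true then G.Adj c.1.1 c.1.2 else ¬ G.Adj c.1.1 c.1.2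

/-! Colour an independent set `S` with `true` and everything else with `false`: a clique meets
`S` in at most one vertex, so this works as soon as `S` meets every maximal clique with two
vertices. With at most four vertices, take `S` to be a maximal independent set through a vertex
`v` of maximum degree. A maximal clique `K` missing `S` would contain a non-neighbour `x` of `v`
(else `K ∪ {v}` is a clique), `x` has a neighbour `t ∈ S`, and `K` has a second vertex `y`; then
`x` has the two neighbours `t, y`, while `v` is adjacent to none of `v, t, x`, so `deg v ≤ 1`. -/

theorem IsMaximalClique.mem_of_forall_adj {V : Type*} {G : SimpleGraph V} {s : Set V}
    (hs : IsMaximalClique G s) {w : V} (hw : ∀ x ∈ s, w ≠ x → G.Adj w x) : w ∈ s := by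
  rw [hs.2 _ (hs.1.insert hw) (Set.subset_insert w s)]
  exact Set.mem_insert w s

theorem SimpleGraph.exists_adj_of_maximal_isIndepSet {V : Type*} {G : SimpleGraph V} {S : Set V}
    (hS : Maximal G.IsIndepSet S) {w : V} (hw : w ∉ S) : ∃ t ∈ S, G.Adj w t := by
  by_contra! h
  have hindep : G.IsIndepSet (insert w S) := by
    have hclique := hS.1
    rw [← isClique_compl] at hclique ⊢
    exact hclique.insert fun t ht hwt => (compl_adj G w t).2 ⟨hwt, h t ht⟩
  exact hw (hS.2 hindep (Set.subset_insert w S) (Set.mem_insert w S))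

theorem twoCliqueColorable_of_isIndepSet {V : Type*} {G : SimpleGraph V} {S : Set V}
    (hS : G.IsIndepSet S)
    (hmeet : ∀ s, IsMaximalClique G s → s.Nontrivial → (s ∩ S).Nonempty) :
    TwoCliqueColorable G := by
  classical
  refine ⟨fun v => decide (v ∈ S), fun s hs hpair hmono => ?_⟩
  obtain ⟨x, hxs, hxS⟩ := hmeet s hs hpair
  obtain ⟨y, hys, hyx⟩ := Set.Nontrivial.exists_ne hpair x
  have hyS : y ∉ S := fun hyS => hS hxS hyS hyx.symm (hs.1 hxs hys hyx.symm)
  simpa [hxS, hyS] using hmono x hxs y hys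

theorem IsMaximalClique.inter_nonempty_of_card_le_four {V : Type*} [Fintype V]
    {G : SimpleGraph V} [DecidableRel G.Adj] (hV : Fintype.card V ≤ 4) {v : V}
    (hv : ∀ w, G.degree w ≤ G.degree v) {S : Set V} (hS : Maximal G.IsIndepSet S) (hvS : v ∈ S)
    {s : Set V} (hs : IsMaximalClique G s) (hpair : s.Nontrivial) :
    (s ∩ S).Nonempty := by
  classical
  by_contra hempty
  have hdisj : ∀ x ∈ s, x ∉ S := fun x hxs hxS => hempty ⟨x, hxs, hxS⟩
  obtain ⟨x, hxs, hvx, hnadj⟩ : ∃ x ∈ s, v ≠ x ∧ ¬G.Adj v x := by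
    by_contra! h
    exact hdisj v (hs.mem_of_forall_adj h) hvS
  obtain ⟨t, htS, hxt⟩ := G.exists_adj_of_maximal_isIndepSet hS (hdisj x hxs)
  obtain ⟨y, hys, hyx⟩ := hpair.exists_ne x
  have hvt : v ≠ t := by rintro rfl; exact hnadj hxt.symm
  have hty : t ≠ y := by rintro rfl; exact hdisj t hys htS
  have hdeg_x : 2 ≤ G.degree x := by
    have hsub : ({t, y} : Finset V) ⊆ G.neighborFinset x := by
      simp [Finset.insert_subset_iff, hxt, hs.1 hxs hys hyx.symm]
    simpa [Finset.card_pair hty] using Finset.card_le_card hsub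
  have hdeg_v : G.degree v + 3 ≤ 4 := by
    have hnbr_disj : Disjoint (G.neighborFinset v) {v, t, x} := by
      simp [Finset.disjoint_right, hnadj, fun h => hS.1 hvS htS hvt h]
    calc G.degree v + 3 = (G.neighborFinset v ∪ {v, t, x}).card := by
          rw [Finset.card_union_of_disjoint hnbr_disj, SimpleGraph.card_neighborFinset_eq_degree,
            Finset.card_eq_three.2 ⟨v, t, x, hvt, hvx, hxt.ne.symm, rfl⟩]
      _ ≤ 4 := (Finset.card_le_univ _).trans hV
  have hxv := hv x
  omega

/-- Every graph on at most 4 vertices is 2-clique-colorable. -/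
theorem twoCliqueColorable_of_card_le_four {V : Type*} [Fintype V]
    (hV : Fintype.card V ≤ 4) (G : SimpleGraph V) :
    TwoCliqueColorable G := by
  classical
  cases isEmpty_or_nonempty V
  · exact twoCliqueColorable_of_isIndepSet (S := ∅) (by simp) fun s _ ⟨u, _⟩ => isEmptyElim u
  obtain ⟨v, hv⟩ := G.exists_maximal_degree_vertex
  obtain ⟨S, hvS, hS⟩ :=
    Finite.exists_le_maximal (p := G.IsIndepSet) (a := {v}) (Set.pairwise_singleton _ _)
  exact twoCliqueColorable_of_isIndepSet hS.1 fun s hs hpair =>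
    hs.inter_nonempty_of_card_le_four hV (fun w => hv ▸ G.degree_le_maxDegree w) hS
      (hvS rfl) hpair
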